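/- In every state reachable from the initial state of the Client MDP: (i) ctr_c = Σ_{i=1}^m ctr_c^i; (ii) ctr_c ≤ n; and (iii) whenever pc_c = 1, one has ctr_c < n. Consequently, if c ≥ n then in every reachable state with pc_c = 1 and s_c = i the guard ctr_c^i < c of the busy sending transition holds, so this guard is a tautology over the reachable state space and can be dropped. -/
import Mathlib


attribute [local instance] Classical.propDecidable

/-- Actions of the `Client` MDP: the `busy` (send) action and internal actions. -/
inductive CAct : Type
  | busy : CAct
  | tau : CAct

/-- A state of the `Client` MDP with servers indexed by `I` and `n` slices to send:
`pcc ∈ {0,1,2}` is the program counter, `sc` the selected recipient (`none` encodes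
`s_c = 0`), `ctrc` the total number of sent slices, and `sctr i` the number of slices sent
to server `i`; all are initially `0`. -/
structure CState (I : Type*) (n : ℕ) where
  pcc : Fin 3
  sc : Option I
  ctrc : Fin (n + 1)
  sctr : I → Fin (n + 1)

/-- Increment of a bounded counter (saturating at `n`; all increments performed by the
model happen strictly below `n`). -/
def finInc {n : ℕ} (x : Fin (n + 1)) : Fin (n + 1) := ⟨min (x.1 + 1) n, by omega⟩

/-- The `busy` (send) step of the client: the slice is sent to server `i`. -/
def sendT {I : Type*} [DecidableEq I] {n : ℕ} (s : CState I n) (i : I) : CState I n :=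
  { s with pcc := 0, sc := none, ctrc := finInc s.ctrc,
           sctr := Function.update s.sctr i (finInc (s.sctr i)) }

/-- Transition probabilities of the `Client` MDP with capacity `c` and recipient
distribution `p`: from `pc_c = 0` with `ctr_c < n` it picks server `i` with probability
`p i`; from `pc_c = 1` it sends the slice (action `busy`) if the recipient's capacity is not
exceeded, and otherwise retries; from `pc_c = 0` with `ctr_c = n` it terminates. -/
noncomputable def clientPr {I : Type*} [DecidableEq I] {n : ℕ} (c : ℕ) (p : I → ℝ)
    (s : CState I n) (α : CAct) (t : CState I n) : ℝ :=
  match α with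
  | CAct.tau =>
      (match t.sc with
        | some i =>
            if s.pcc = 0 ∧ (s.ctrc : ℕ) < n ∧ t = { s with pcc := 1, sc := some i } then
              p i
            else 0
        | none => 0)
      + (if (∃ i, s.sc = some i ∧ c ≤ (s.sctr i : ℕ)) ∧ s.pcc = 1 ∧
            t = { s with pcc := 0, sc := none } then 1 else 0)
      + (if s.pcc = 0 ∧ (s.ctrc : ℕ) = n ∧ t = { s with pcc := 2 } then 1 else 0)
  | CAct.busy =>
      match s.sc with
      | some i =>
          if s.pcc = 1 ∧ (s.sctr i : ℕ) < c ∧ t = sendT s i then 1 else 0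
      | none => 0

/-- The initial state of the client: everything is `0`. -/
def initC {I : Type*} {n : ℕ} : CState I n := ⟨0, none, 0, fun _ => 0⟩

/-- States reachable from the initial state by finitely many positive-probability
transitions. -/
def ReachC {I : Type*} [DecidableEq I] {n : ℕ} (c : ℕ) (p : I → ℝ) : CState I n → Prop :=
  Relation.ReflTransGen (fun s t => ∃ α, 0 < clientPr c p s α t) initC

/-- Invariants of the `Client` MDP: in every reachable state, (i) `ctr_c = Σᵢ ctr_c^i`,
(ii) `ctr_c ≤ n`, and (iii) `pc_c = 1 → ctr_c < n`. Consequently, if `c ≥ n` then in every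
reachable state with `pc_c = 1` and `s_c = i` the capacity guard `ctr_c^i < c` of the `busy`
sending transition holds (so the guard is a tautology over the reachable state space and can
be dropped). -/
theorem stmt5 {I : Type*} [Fintype I] [DecidableEq I] {n : ℕ} (c : ℕ) (p : I → ℝ)
    (s : CState I n) (hs : ReachC c p s) :
    ((s.ctrc : ℕ) = ∑ i, (s.sctr i : ℕ)) ∧
    (s.ctrc : ℕ) ≤ n ∧
    (s.pcc = 1 → (s.ctrc : ℕ) < n) ∧
    (n ≤ c → s.pcc = 1 → ∀ i, s.sc = some i → (s.sctr i : ℕ) < c) := by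
  suffices h : ((s.ctrc : ℕ) = ∑ i, (s.sctr i : ℕ)) ∧ (s.ctrc : ℕ) ≤ n ∧
      (s.pcc = 1 → (s.ctrc : ℕ) < n) by
    refine ⟨h.1, h.2.1, h.2.2, ?_⟩
    intro hc h1 i hi
    have hle : (s.sctr i : ℕ) ≤ ∑ j, (s.sctr j : ℕ) :=
      Finset.single_le_sum (f := fun j => ((s.sctr j : Fin (n+1)) : ℕ))
        (fun _ _ => Nat.zero_le _) (Finset.mem_univ i)
    have := h.2.2 h1
    omega
  induction hs with
  | refl => simp [initC]
  | tail hab hbc ih =>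
    rename_i b t
    obtain ⟨h1, h2, h3⟩ := ih
    obtain ⟨α, hα⟩ := hbc
    cases α with
    | busy =>
      cases hb : b.sc with
      | none => simp [clientPr, hb] at hα
      | some i =>
        simp only [clientPr, hb] at hα
        have hcond : b.pcc = 1 ∧ (b.sctr i : ℕ) < c ∧ t = sendT b i := by
          by_contra hcon
          rw [if_neg hcon] at hα
          exact lt_irrefl 0 hα
        obtain ⟨hp1, _, ht⟩ := hcond
        subst ht
        have hlt : (b.ctrc : ℕ) < n := h3 hp1
        have hsi : (b.sctr i : ℕ) ≤ (b.ctrc : ℕ) := by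
          rw [h1]
          exact Finset.single_le_sum (f := fun j => ((b.sctr j : Fin (n+1)) : ℕ))
            (fun _ _ => Nat.zero_le _) (Finset.mem_univ i)
        have hinc1 : ((finInc b.ctrc : Fin (n+1)) : ℕ) = (b.ctrc : ℕ) + 1 := by
          simp [finInc]; omega
        have hinc2 : ((finInc (b.sctr i) : Fin (n+1)) : ℕ) = (b.sctr i : ℕ) + 1 := by
          simp [finInc]; omega
        have hfun : (fun j => ((Function.update b.sctr i (finInc (b.sctr i)) j : Fin (n+1)) : ℕ))
            = Function.update (fun j => ((b.sctr j : Fin (n+1)) : ℕ)) i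
              ((finInc (b.sctr i) : Fin (n+1)) : ℕ) := by
          funext j
          by_cases hj : j = i
          · subst hj; simp
          · simp [Function.update_of_ne hj]
        have hsum : ∑ j, ((Function.update b.sctr i (finInc (b.sctr i)) j : Fin (n+1)) : ℕ)
            = ((finInc (b.sctr i) : Fin (n+1)) : ℕ) + ∑ j ∈ Finset.univ \ {i}, (b.sctr j : ℕ) := by
          rw [hfun]
          exact Finset.sum_update_of_mem (Finset.mem_univ i) _ _
        have hsum0 : ∑ j, (b.sctr j : ℕ)
            = ∑ j ∈ Finset.univ \ {i}, (b.sctr j : ℕ) + (b.sctr i : ℕ) :=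
          Finset.sum_eq_sum_sdiff_singleton_add (Finset.mem_univ i) _
        refine ⟨?_, ?_, ?_⟩
        · show ((finInc b.ctrc : Fin (n+1)) : ℕ) = _
          rw [hinc1]
          show _ = ∑ j, ((Function.update b.sctr i (finInc (b.sctr i)) j : Fin (n+1)) : ℕ)
          rw [hsum, hinc2]
          omega
        · show ((finInc b.ctrc : Fin (n+1)) : ℕ) ≤ n
          omega
        · intro hpc
          exact absurd hpc (by simp [sendT])
    | tau =>
      simp only [clientPr] at hα
      by_cases hA : b.pcc = 0 ∧ (b.ctrc : ℕ) = n ∧ t = { b with pcc := 2 }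
      · obtain ⟨_, _, ht⟩ := hA
        subst ht
        exact ⟨h1, h2, fun hpc => absurd hpc (by simp)⟩
      · rw [if_neg hA] at hα
        by_cases hB : (∃ i, b.sc = some i ∧ c ≤ (b.sctr i : ℕ)) ∧ b.pcc = 1 ∧
            t = { b with pcc := 0, sc := none }
        · obtain ⟨_, _, ht⟩ := hB
          subst ht
          exact ⟨h1, h2, fun hpc => absurd hpc (by simp)⟩
        · rw [if_neg hB] at hα
          simp only [add_zero] at hα
          cases hts : t.sc with
          | none => simp [hts] at hα
          | some i =>
            rw [hts] at hα
            have hα : 0 < (if b.pcc = 0 ∧ (b.ctrc : ℕ) < n ∧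
                t = { b with pcc := 1, sc := some i } then p i else 0) := hα
            have hcond : b.pcc = 0 ∧ (b.ctrc : ℕ) < n ∧ t = { b with pcc := 1, sc := some i } := by
              by_contra hcon
              rw [if_neg hcon] at hα
              exact lt_irrefl 0 hα
            obtain ⟨_, hlt, ht⟩ := hcond
            subst ht
            exact ⟨h1, h2, fun _ => hlt⟩
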